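/- Let H be a connected multigraph on a finite vertex set V with root r ∈ V, and suppose e = {a,b} is a bridge of H: μ(a,b) = 1 and deleting the edge {a,b} disconnects the support graph into two connected pieces, with vertex sets V₁ ∋ r, a and V₂ ∋ b. Let H₁ and H₂ be the multigraphs obtained by restricting μ to V₁ and to V₂ respectively. Then Q_{H,r}(q) = Q_{H₁,r}(q) · Q_{H₂,b}(q); equivalently, in terms of the paper's generating functions P = q^{−1}Q, one has P_{H,r}(q) = q · P_{H₁,r}(q) · P_{H₂,b}(q). -/

import Mathlib

open scoped Classical

/-- Out-degree of vertex `i` with respect to a vertex subset `I`. -/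
def outdeg {V : Type*} [Fintype V] [DecidableEq V] (μ : V → V → ℕ)
    (I : Finset V) (i : V) : ℕ :=
  ∑ j ∈ Iᶜ, μ i j

/-- An `(H,r)`-parking function of the multigraph `μ` rooted at `r`. -/
def IsParking {V : Type*} [Fintype V] [DecidableEq V] (μ : V → V → ℕ) (r : V)
    (f : V → ℤ) : Prop :=
  f r = -1 ∧ (∀ v, v ≠ r → 0 ≤ f v) ∧
  ∀ I : Finset V, I.Nonempty → r ∉ I → ∃ i ∈ I, f i < (outdeg μ I i : ℤ)

/-- The generating polynomial `Q_{H,r}(q) = Σ_f q^{Σ_{v ≠ r} f(v)}` of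
`(H,r)`-parking functions. -/
noncomputable def Qpoly {V : Type*} [Fintype V] [DecidableEq V] (μ : V → V → ℕ)
    (r : V) : Polynomial ℤ :=
  ∑ᶠ f ∈ {f : V → ℤ | IsParking μ r f},
    (Polynomial.X : Polynomial ℤ) ^ (∑ v ∈ Finset.univ.erase r, f v).toNat

/-- The simple support graph of the multigraph `μ`. -/
def supportGraph {V : Type*} (μ : V → V → ℕ) : SimpleGraph V where
  Adj i j := i ≠ j ∧ 1 ≤ μ i j ∧ 1 ≤ μ j i
  symm := ⟨fun i j h => ⟨h.1.symm, h.2.2, h.2.1⟩⟩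
  loopless := ⟨fun i h => h.1 rfl⟩

/-- The multigraph obtained by deleting one copy of the edge `{a,b}`. -/
def deleteEdge {V : Type*} [DecidableEq V] (μ : V → V → ℕ) (a b : V) : V → V → ℕ :=
  fun u v => μ u v - if (u = a ∧ v = b) ∨ (u = b ∧ v = a) then 1 else 0

/-!
A parking function `f` of `H` vanishes at `b`: the set `V₂` is left only through the bridge, so
the parking condition for `I = V₂` can be met only at `b`, with `f b < 1`. Since `{a, b}` is the
only edge between `V₁` and `V₂`, the parking condition of `H` then splits into that of `H₁` for
`f|V₁` and that of `H₂` for `f|V₂` with `b` reset to the root value `-1`. This bijection between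
parking functions of `H` and pairs of parking functions of `H₁`, `H₂` preserves total weight
because `f b = 0`.
-/

section

variable {V : Type*} [DecidableEq V]

theorem sum_union_sdiff_of_disjoint {V₁ V₂ : Finset V} (hdisj : Disjoint V₁ V₂) (I : Finset V)
    (φ : V → ℤ) : ∑ j ∈ (V₁ ∪ V₂) \ I, φ j = ∑ j ∈ V₁ \ I, φ j + ∑ j ∈ V₂ \ I, φ j := by
  rw [Finset.union_sdiff_distrib,
    Finset.sum_union (hdisj.mono Finset.sdiff_subset Finset.sdiff_subset)]

/-- The parking condition of the restriction of `μ` to `W`, phrased for functions on all of `V`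
(values outside `W` are ignored), so that restrictions to several subsets can be compared. -/
def IsParkingOn (μ : V → V → ℕ) (W : Finset V) (r : V) (f : V → ℤ) : Prop :=
  f r = -1 ∧ (∀ v ∈ W, v ≠ r → 0 ≤ f v) ∧
  ∀ I ⊆ W, I.Nonempty → r ∉ I → ∃ i ∈ I, f i < ∑ j ∈ W \ I, (μ i j : ℤ)

theorem isParking_iff_isParkingOn_univ [Fintype V] (μ : V → V → ℕ) (r : V) (f : V → ℤ) :
    IsParking μ r f ↔ IsParkingOn μ Finset.univ r f := by
  simp only [IsParking, IsParkingOn, outdeg, Finset.mem_univ, Finset.subset_univ, true_implies,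
    ← Finset.compl_eq_univ_sdiff, Nat.cast_sum]

theorem outdeg_subtype [Fintype V] (μ : V → V → ℕ) (W J : Finset V) (i : W) :
    outdeg (fun u w : W => μ u w) (J.subtype (· ∈ W)) i = ∑ j ∈ W \ J, μ i j := by
  have hcompl : (J.subtype (· ∈ W))ᶜ = (W \ J).subtype (· ∈ W) := by
    ext x
    simp [x.2]
  rw [outdeg, hcompl, Finset.sum_subtype_eq_sum_filter,
    Finset.filter_true_of_mem fun _ hx => (Finset.mem_sdiff.1 hx).1]

theorem isParking_subtype_iff [Fintype V] (μ : V → V → ℕ) {W : Finset V} {r : V} (hr : r ∈ W)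
    (f : V → ℤ) :
    IsParking (fun u w : W => μ u w) ⟨r, hr⟩ (fun v => f v) ↔ IsParkingOn μ W r f := by
  refine and_congr Iff.rfl (and_congr
    ⟨fun h v hv hvr => h ⟨v, hv⟩ fun e => hvr (congrArg Subtype.val e),
      fun h v hvr => h v v.2 fun e => hvr (Subtype.ext e)⟩ ⟨?_, ?_⟩)
  · intro h J hJ hJne hrJ
    obtain ⟨x, hx⟩ := hJne
    obtain ⟨i, hi, hlt⟩ := h (J.subtype (· ∈ W)) ⟨⟨x, hJ hx⟩, Finset.mem_subtype.2 hx⟩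
      fun h => hrJ (Finset.mem_subtype.1 h)
    refine ⟨i, Finset.mem_subtype.1 hi, ?_⟩
    rwa [outdeg_subtype, Nat.cast_sum] at hlt
  · intro h I hIne hrI
    have hI : (I.map (Function.Embedding.subtype _)).subtype (· ∈ W) = I := by
      ext x
      simp
    obtain ⟨i, hi, hlt⟩ := h (I.map (Function.Embedding.subtype _))
      (fun x hx => by obtain ⟨y, -, rfl⟩ := Finset.mem_map.1 hx; exact y.2)
      hIne.map fun h => by
        obtain ⟨y, hy, hyr⟩ := Finset.mem_map.1 h
        exact hrI (Subtype.ext (a2 := ⟨r, hr⟩) hyr ▸ hy)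
    obtain ⟨y, hy, rfl⟩ := Finset.mem_map.1 hi
    refine ⟨y, hy, ?_⟩
    rwa [← hI, outdeg_subtype, Nat.cast_sum]

theorem IsParkingOn.exists_lt_of_subset {μ : V → V → ℕ} {W W' : Finset V} {r : V} {f : V → ℤ}
    (hf : IsParkingOn μ W' r f) (hW : W' ⊆ W) {I : Finset V} (hI : (I ∩ W').Nonempty)
    (hrI : r ∉ I) : ∃ i ∈ I, f i < ∑ j ∈ W \ I, (μ i j : ℤ) := by
  obtain ⟨i, hi, hlt⟩ := hf.2.2 (I ∩ W') Finset.inter_subset_right hI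
    fun h => hrI (Finset.mem_inter.1 h).1
  refine ⟨i, (Finset.mem_inter.1 hi).1, hlt.trans_le ?_⟩
  rw [Finset.sdiff_inter_self_right]
  exact Finset.sum_le_sum_of_subset_of_nonneg (Finset.sdiff_subset_sdiff hW le_rfl)
    fun _ _ _ => Int.natCast_nonneg _

def IsBridgeCut (μ : V → V → ℕ) (V₁ V₂ : Finset V) (a b : V) : Prop :=
  ∀ u ∈ V₁, ∀ v ∈ V₂, μ u v = (if u = a ∧ v = b then 1 else 0) ∧ μ v u = μ u v

theorem isBridgeCut_of_reachable_iff {μ : V → V → ℕ} (hsym : ∀ i j, μ i j = μ j i) {a b : V}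
    (hμab : μ a b = 1) {V₁ V₂ : Finset V} (hdisj : Disjoint V₁ V₂) (ha : a ∈ V₁) (hb : b ∈ V₂)
    (hsplit : ∀ u v : V, (supportGraph (deleteEdge μ a b)).Reachable u v ↔
      ((u ∈ V₁ ∧ v ∈ V₁) ∨ (u ∈ V₂ ∧ v ∈ V₂))) :
    IsBridgeCut μ V₁ V₂ a b := by
  intro u hu v hv
  refine ⟨?_, hsym v u⟩
  split_ifs with hab
  · rw [hab.1, hab.2, hμab]
  · have hub : u ≠ b := fun e => Finset.disjoint_left.1 hdisj hu (e ▸ hb)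
    have hva : v ≠ a := fun e => Finset.disjoint_left.1 hdisj ha (e ▸ hv)
    by_contra hne
    have hadj : (supportGraph (deleteEdge μ a b)).Adj u v := by
      refine ⟨fun e => Finset.disjoint_left.1 hdisj hu (e ▸ hv), ?_, ?_⟩ <;>
        simp only [deleteEdge, ← hsym u v] <;> grind
    rcases (hsplit u v).1 hadj.reachable with ⟨-, hv₁⟩ | ⟨hu₂, -⟩
    · exact Finset.disjoint_left.1 hdisj hv₁ hv
    · exact Finset.disjoint_left.1 hdisj hu hu₂

namespace IsBridgeCut

variable {μ : V → V → ℕ} {V₁ V₂ : Finset V} {a b r : V} {f : V → ℤ}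

theorem symm (h : IsBridgeCut μ V₁ V₂ a b) : IsBridgeCut μ V₂ V₁ b a := by
  intro u hu v hv
  obtain ⟨hvu, huv⟩ := h v hv u hu
  refine ⟨?_, hvu.symm ▸ huv.symm⟩
  simp only [huv, hvu, and_comm]

theorem sum_eq (h : IsBridgeCut μ V₁ V₂ a b) {i : V} (hi : i ∈ V₁) {J : Finset V} (hJ : J ⊆ V₂) :
    ∑ j ∈ J, (μ i j : ℤ) = if i = a ∧ b ∈ J then 1 else 0 := by
  rw [Finset.sum_congr rfl fun j hj => congrArg (Nat.cast : ℕ → ℤ) (h i hi j (hJ hj)).1]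
  by_cases hia : i = a <;> simp [hia, Finset.sum_ite_eq']

theorem eq_zero_of_isParkingOn_union (h : IsBridgeCut μ V₁ V₂ a b) (hdisj : Disjoint V₁ V₂)
    (hr : r ∈ V₁) (hb : b ∈ V₂) (hf : IsParkingOn μ (V₁ ∪ V₂) r f) : f b = 0 := by
  have hrV₂ : r ∉ V₂ := Finset.disjoint_left.1 hdisj hr
  obtain ⟨i, hi, hlt⟩ := hf.2.2 V₂ Finset.subset_union_right ⟨b, hb⟩ hrV₂
  have hfi : 0 ≤ f i := hf.2.1 i (Finset.mem_union_right _ hi) fun e => hrV₂ (e ▸ hi)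
  rw [Finset.union_sdiff_cancel_right hdisj, h.symm.sum_eq hi subset_rfl] at hlt
  split_ifs at hlt with hib
  · rw [← hib.1]
    omega
  · omega

theorem isParkingOn_left (h : IsBridgeCut μ V₁ V₂ a b) (hdisj : Disjoint V₁ V₂)
    (hr : r ∈ V₁) (hf : IsParkingOn μ (V₁ ∪ V₂) r f) : IsParkingOn μ V₁ r f := by
  have hrV₂ : r ∉ V₂ := Finset.disjoint_left.1 hdisj hr
  refine ⟨hf.1, fun v hv => hf.2.1 v (Finset.mem_union_left _ hv), fun I hI hIne hrI => ?_⟩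
  by_cases haI : a ∈ I
  · obtain ⟨i, hi, hlt⟩ := hf.2.2 (I ∪ V₂) (Finset.union_subset_union hI subset_rfl)
      (hIne.mono Finset.subset_union_left) (by simp [hrI, hrV₂])
    have hV₂ : V₂ \ (I ∪ V₂) = ∅ := Finset.sdiff_eq_empty_iff_subset.2 Finset.subset_union_right
    have hV₁ : V₁ \ (I ∪ V₂) = V₁ \ I := by
      ext x
      have := @Finset.disjoint_left.1 hdisj x
      simp only [Finset.mem_sdiff, Finset.mem_union]
      tauto
    rw [sum_union_sdiff_of_disjoint hdisj, hV₂, hV₁, Finset.sum_empty, add_zero] at hlt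
    refine ⟨i, (Finset.mem_union.1 hi).resolve_right fun hi₂ => ?_, hlt⟩
    rw [h.symm.sum_eq hi₂ Finset.sdiff_subset,
      if_neg fun e => (Finset.mem_sdiff.1 e.2).2 haI] at hlt
    have := hf.2.1 i (Finset.mem_union_right _ hi₂) fun e => hrV₂ (e ▸ hi₂)
    omega
  · obtain ⟨i, hi, hlt⟩ := hf.2.2 I (hI.trans Finset.subset_union_left) hIne hrI
    rw [sum_union_sdiff_of_disjoint hdisj, h.sum_eq (hI hi) Finset.sdiff_subset,
      if_neg fun e : i = a ∧ _ => haI (e.1 ▸ hi), add_zero] at hlt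
    exact ⟨i, hi, hlt⟩

theorem isParkingOn_right (h : IsBridgeCut μ V₁ V₂ a b) (hdisj : Disjoint V₁ V₂)
    (hr : r ∈ V₁) (hf : IsParkingOn μ (V₁ ∪ V₂) r f) :
    IsParkingOn μ V₂ b (Function.update f b (-1)) := by
  have hrV₂ : r ∉ V₂ := Finset.disjoint_left.1 hdisj hr
  refine ⟨Function.update_self .., fun v hv hvb => ?_, fun I hI hIne hbI => ?_⟩
  · rw [Function.update_of_ne hvb]
    exact hf.2.1 v (Finset.mem_union_right _ hv) fun e => hrV₂ (e ▸ hv)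
  · obtain ⟨i, hi, hlt⟩ := hf.2.2 I (hI.trans Finset.subset_union_right) hIne
      fun hrI => hrV₂ (hI hrI)
    have hib : i ≠ b := fun e => hbI (e ▸ hi)
    rw [sum_union_sdiff_of_disjoint hdisj, h.symm.sum_eq (hI hi) Finset.sdiff_subset,
      if_neg fun e => hib e.1, zero_add] at hlt
    exact ⟨i, hi, by rwa [Function.update_of_ne hib]⟩

theorem isParkingOn_union (h : IsBridgeCut μ V₁ V₂ a b) (hdisj : Disjoint V₁ V₂) (ha : a ∈ V₁)
    (hb : b ∈ V₂) (hfb : f b = 0) (hf₁ : IsParkingOn μ V₁ r f)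
    (hf₂ : IsParkingOn μ V₂ b (Function.update f b (-1))) : IsParkingOn μ (V₁ ∪ V₂) r f := by
  refine ⟨hf₁.1, fun v hv hvr => ?_, fun I hI hIne hrI => ?_⟩
  · rcases Finset.mem_union.1 hv with hv₁ | hv₂
    · exact hf₁.2.1 v hv₁ hvr
    by_cases hvb : v = b
    · rw [hvb, hfb]
    · simpa [Function.update_of_ne hvb] using hf₂.2.1 v hv₂ hvb
  by_cases hI₂ : (I ∩ V₂).Nonempty ∧ b ∉ I
  · obtain ⟨i, hi, hlt⟩ :=
      hf₂.exists_lt_of_subset (Finset.subset_union_right (s₁ := V₁)) hI₂.1 hI₂.2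
    have hib : i ≠ b := fun e => hI₂.2 (e ▸ hi)
    exact ⟨i, hi, by rwa [Function.update_of_ne hib] at hlt⟩
  by_cases hbI : b ∈ I ∧ a ∉ I
  · refine ⟨b, hbI.1, ?_⟩
    rw [hfb, sum_union_sdiff_of_disjoint hdisj, h.symm.sum_eq hb Finset.sdiff_subset,
      if_pos ⟨rfl, Finset.mem_sdiff.2 ⟨ha, hbI.2⟩⟩]
    have := Finset.sum_nonneg fun j (_ : j ∈ V₂ \ I) => Int.natCast_nonneg (μ b j)
    omega
  refine hf₁.exists_lt_of_subset Finset.subset_union_left ?_ hrI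
  obtain ⟨x, hx⟩ := hIne
  rcases Finset.mem_union.1 (hI hx) with hx₁ | hx₂
  · exact ⟨x, Finset.mem_inter.2 ⟨hx, hx₁⟩⟩
  · have hbI' : b ∈ I := by_contra fun hb' => hI₂ ⟨⟨x, Finset.mem_inter.2 ⟨hx, hx₂⟩⟩, hb'⟩
    exact ⟨a, Finset.mem_inter.2 ⟨by_contra fun ha' => hbI ⟨hbI', ha'⟩, ha⟩⟩

theorem isParkingOn_union_iff (h : IsBridgeCut μ V₁ V₂ a b) (hdisj : Disjoint V₁ V₂) (hr : r ∈ V₁)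
    (ha : a ∈ V₁) (hb : b ∈ V₂) :
    IsParkingOn μ (V₁ ∪ V₂) r f ↔ f b = 0 ∧ IsParkingOn μ V₁ r f ∧
      IsParkingOn μ V₂ b (Function.update f b (-1)) :=
  ⟨fun hf => ⟨h.eq_zero_of_isParkingOn_union hdisj hr hb hf, h.isParkingOn_left hdisj hr hf,
      h.isParkingOn_right hdisj hr hf⟩,
    fun ⟨hfb, hf₁, hf₂⟩ => h.isParkingOn_union hdisj ha hb hfb hf₁ hf₂⟩

end IsBridgeCut

section Glue

open Function

variable {V₁ V₂ : Finset V} {b : V}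

/-- Inverse, on parking functions, of `f ↦ (f|V₁, (update f b (-1))|V₂)`. -/
noncomputable def glue (V₁ V₂ : Finset V) (b : V) (g₁ : V₁ → ℤ) (g₂ : V₂ → ℤ) : V → ℤ :=
  update (V₁.piecewise (extend Subtype.val g₁ 0) (extend Subtype.val g₂ 0)) b 0

theorem glue_restrict_left (hb : b ∉ V₁) (g₁ : V₁ → ℤ) (g₂ : V₂ → ℤ) :
    (fun v : V₁ => glue V₁ V₂ b g₁ g₂ v) = g₁ := by
  funext v
  rw [glue, update_of_ne fun e : (v : V) = b => hb (e ▸ v.2), Finset.piecewise_eq_of_mem _ _ _ v.2,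
    Subtype.val_injective.extend_apply]

theorem update_glue_restrict_right (hdisj : Disjoint V₁ V₂) (hb : b ∈ V₂) (g₁ : V₁ → ℤ)
    {g₂ : V₂ → ℤ} (hg₂ : g₂ ⟨b, hb⟩ = -1) :
    (fun v : V₂ => update (glue V₁ V₂ b g₁ g₂) b (-1) v) = g₂ := by
  funext v
  by_cases hvb : (v : V) = b
  · obtain rfl : v = ⟨b, hb⟩ := Subtype.ext hvb
    simp [hg₂]
  · rw [update_of_ne hvb, glue, update_of_ne hvb,
      Finset.piecewise_eq_of_notMem _ _ _ (Finset.disjoint_right.1 hdisj v.2),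
      Subtype.val_injective.extend_apply]

theorem glue_restrict [Fintype V] (hunion : V₁ ∪ V₂ = Finset.univ) {f : V → ℤ} (hfb : f b = 0) :
    glue V₁ V₂ b (fun v : V₁ => f v) (fun v : V₂ => update f b (-1) v) = f := by
  funext v
  by_cases hvb : v = b
  · rw [hvb, glue, update_self, hfb]
  rw [glue, update_of_ne hvb]
  by_cases hv₁ : v ∈ V₁
  · rw [Finset.piecewise_eq_of_mem _ _ _ hv₁,
      Subtype.val_injective.extend_apply (g := fun v : V₁ => f v) (a := ⟨v, hv₁⟩)]
  · have hv₂ : v ∈ V₂ := (Finset.mem_union.1 (hunion ▸ Finset.mem_univ v)).resolve_left hv₁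
    rw [Finset.piecewise_eq_of_notMem _ _ _ hv₁,
      Subtype.val_injective.extend_apply (g := fun v : V₂ => update f b (-1) v) (a := ⟨v, hv₂⟩),
      update_of_ne hvb]

end Glue

section Polynomial

open Polynomial

variable [Fintype V]

theorem finite_setOf_isParking (μ : V → V → ℕ) (r : V) :
    {f : V → ℤ | IsParking μ r f}.Finite := by
  refine (Set.Finite.pi fun v => Set.finite_Icc (-1 : ℤ) (outdeg μ {v} v)).subset ?_
  rintro f ⟨hfr, hf₀, hf⟩ v -
  by_cases hvr : v = r
  · rw [hvr, hfr]
    exact ⟨le_rfl, by omega⟩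
  · obtain ⟨i, hi, hlt⟩ := hf {v} (Finset.singleton_nonempty v) (by simpa [eq_comm] using hvr)
    rw [Finset.mem_singleton.1 hi] at hlt
    exact ⟨by linarith [hf₀ v hvr], hlt.le⟩

theorem Qpoly_eq_sum (μ : V → V → ℕ) (r : V) :
    Qpoly μ r = ∑ f ∈ (finite_setOf_isParking μ r).toFinset,
      (X : ℤ[X]) ^ (∑ v ∈ Finset.univ.erase r, f v).toNat := by
  rw [Qpoly, ← finsum_mem_coe_finset, Set.Finite.coe_toFinset]

theorem IsParking.sum_erase_nonneg {μ : V → V → ℕ} {r : V} {f : V → ℤ} (hf : IsParking μ r f) :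
    0 ≤ ∑ v ∈ Finset.univ.erase r, f v :=
  Finset.sum_nonneg fun v hv => hf.2.1 v (Finset.ne_of_mem_erase hv)

theorem sum_erase_eq_add_sum_erase_subtype {V₁ V₂ : Finset V} (hdisj : Disjoint V₁ V₂)
    (hunion : V₁ ∪ V₂ = Finset.univ) {r b : V} (hr : r ∈ V₁) (hb : b ∈ V₂) {f : V → ℤ}
    (hfb : f b = 0) :
    ∑ v ∈ Finset.univ.erase r, f v =
      ∑ v ∈ (Finset.univ : Finset V₁).erase ⟨r, hr⟩, f v +
        ∑ v ∈ (Finset.univ : Finset V₂).erase ⟨b, hb⟩, Function.update f b (-1) v := by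
  have hupd : ∑ v ∈ (Finset.univ : Finset V₂).erase ⟨b, hb⟩, Function.update f b (-1) v =
      ∑ v ∈ (Finset.univ : Finset V₂).erase ⟨b, hb⟩, f v :=
    Finset.sum_congr rfl fun v hv =>
      Function.update_of_ne (fun e => Finset.ne_of_mem_erase hv (Subtype.ext e)) _ _
  rw [hupd, Finset.sum_erase_eq_sub (Finset.mem_univ _),
    Finset.sum_erase_eq_sub (Finset.mem_univ _), Finset.sum_erase_eq_sub (Finset.mem_univ _),
    Finset.sum_coe_sort V₁ f, Finset.sum_coe_sort V₂ f, ← hunion, Finset.sum_union hdisj, hfb]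
  ring

namespace IsBridgeCut

variable {μ : V → V → ℕ} {V₁ V₂ : Finset V} {a b r : V}

theorem isParking_iff (h : IsBridgeCut μ V₁ V₂ a b) (hunion : V₁ ∪ V₂ = Finset.univ)
    (hdisj : Disjoint V₁ V₂) (hr : r ∈ V₁) (ha : a ∈ V₁) (hb : b ∈ V₂) (f : V → ℤ) :
    IsParking μ r f ↔ f b = 0 ∧ IsParking (fun u w : V₁ => μ u w) ⟨r, hr⟩ (fun v => f v) ∧
      IsParking (fun u w : V₂ => μ u w) ⟨b, hb⟩ (fun v => Function.update f b (-1) v) := by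
  rw [isParking_iff_isParkingOn_univ, ← hunion, h.isParkingOn_union_iff hdisj hr ha hb,
    isParking_subtype_iff, isParking_subtype_iff]

theorem Qpoly_eq_mul (h : IsBridgeCut μ V₁ V₂ a b) (hunion : V₁ ∪ V₂ = Finset.univ)
    (hdisj : Disjoint V₁ V₂) (hr : r ∈ V₁) (ha : a ∈ V₁) (hb : b ∈ V₂) :
    Qpoly μ r =
      Qpoly (fun u w : V₁ => μ u w) ⟨r, hr⟩ * Qpoly (fun u w : V₂ => μ u w) ⟨b, hb⟩ := by
  have hbV₁ : b ∉ V₁ := Finset.disjoint_right.1 hdisj hb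
  rw [Qpoly_eq_sum, Qpoly_eq_sum, Qpoly_eq_sum, Finset.sum_mul_sum, ← Finset.sum_product']
  refine Finset.sum_nbij'
    (fun f => ((fun v : V₁ => f v), (fun v : V₂ => Function.update f b (-1) v)))
    (fun g => glue V₁ V₂ b g.1 g.2) ?_ ?_ ?_ ?_ ?_ <;>
    simp only [Set.Finite.mem_toFinset, Finset.mem_product, Set.mem_ofPred_eq]
  · exact fun f hf => ((h.isParking_iff hunion hdisj hr ha hb f).1 hf).2
  · rintro ⟨g₁, g₂⟩ ⟨hg₁, hg₂⟩
    refine (h.isParking_iff hunion hdisj hr ha hb _).2 ⟨Function.update_self .., ?_, ?_⟩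
    · rwa [glue_restrict_left hbV₁]
    · rwa [update_glue_restrict_right hdisj hb _ hg₂.1]
  · exact fun f hf => glue_restrict hunion ((h.isParking_iff hunion hdisj hr ha hb f).1 hf).1
  · rintro ⟨g₁, g₂⟩ ⟨-, hg₂⟩
    exact Prod.ext (glue_restrict_left hbV₁ g₁ g₂) (update_glue_restrict_right hdisj hb g₁ hg₂.1)
  · intro f hf
    obtain ⟨hfb, hf₁, hf₂⟩ := (h.isParking_iff hunion hdisj hr ha hb f).1 hf
    rw [← pow_add, sum_erase_eq_add_sum_erase_subtype hdisj hunion hr hb hfb,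
      Int.toNat_add hf₁.sum_erase_nonneg hf₂.sum_erase_nonneg]

end IsBridgeCut

end Polynomial

end

theorem parking_bridge_decomposition_general {V : Type*} [Fintype V] [DecidableEq V]
    (μ : V → V → ℕ) (hsym : ∀ i j, μ i j = μ j i)
    (r a b : V) (hμab : μ a b = 1)
    (V₁ V₂ : Finset V) (hunion : V₁ ∪ V₂ = Finset.univ) (hdisj : Disjoint V₁ V₂)
    (hr : r ∈ V₁) (ha : a ∈ V₁) (hb : b ∈ V₂)
    (hsplit : ∀ u v : V, (supportGraph (deleteEdge μ a b)).Reachable u v ↔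
      ((u ∈ V₁ ∧ v ∈ V₁) ∨ (u ∈ V₂ ∧ v ∈ V₂))) :
    Qpoly μ r =
      Qpoly (fun u w : {x // x ∈ V₁} => μ u w) ⟨r, hr⟩ *
        Qpoly (fun u w : {x // x ∈ V₂} => μ u w) ⟨b, hb⟩ :=
  (isBridgeCut_of_reachable_iff hsym hμab hdisj ha hb hsplit).Qpoly_eq_mul hunion hdisj hr ha hb

/-- Bridge decomposition: if `e = {a,b}` is a bridge of the connected multigraph `H`
rooted at `r`, whose deletion splits the support graph into connected pieces with
vertex sets `V₁ ∋ r, a` and `V₂ ∋ b`, and `H₁`, `H₂` are the restrictions of `μ` to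
`V₁`, `V₂`, then `Q_{H,r}(q) = Q_{H₁,r}(q) ⬝ Q_{H₂,b}(q)`. -/
theorem parking_bridge_decomposition {V : Type*} [Fintype V] [DecidableEq V]
    (μ : V → V → ℕ) (hsym : ∀ i j, μ i j = μ j i)
    (hconn : (supportGraph μ).Connected)
    (r a b : V) (hab : a ≠ b) (hμab : μ a b = 1)
    (V₁ V₂ : Finset V) (hunion : V₁ ∪ V₂ = Finset.univ) (hdisj : Disjoint V₁ V₂)
    (hr : r ∈ V₁) (ha : a ∈ V₁) (hb : b ∈ V₂)
    (hsplit : ∀ u v : V, (supportGraph (deleteEdge μ a b)).Reachable u v ↔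
      ((u ∈ V₁ ∧ v ∈ V₁) ∨ (u ∈ V₂ ∧ v ∈ V₂))) :
    Qpoly μ r =
      Qpoly (fun u w : {x // x ∈ V₁} => μ u w) ⟨r, hr⟩ *
        Qpoly (fun u w : {x // x ∈ V₂} => μ u w) ⟨b, hb⟩ :=
  parking_bridge_decomposition_general μ hsym r a b hμab V₁ V₂ hunion hdisj hr ha hb hsplit
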